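/- arXiv:1702.07171 — 2 statements merged into one kernel-verified Lean document; each statement's English description precedes it below -/
import Mathlib

section
/- Let E be a real normed vector space and let v : E → ℝ be of class C² (ContDiff ℝ 2 v). Define the circle-valued lift u : E → ℝ² by u(x) = (cos(v(x)), sin(v(x))). Then for every x ∈ E, ‖iteratedFDeriv ℝ 2 u x‖ ≥ ‖fderiv ℝ v x‖², where the left-hand side is the norm of the second iterated Fréchet derivative as a continuous bilinear map and the right-hand side is the square of the operator norm of the derivative of v. -/
/-!
Identify `ℝ²` isometrically with `ℂ`, so that `u = exp (i v)`. The second-order chain rule gives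
`D²u(x)[h, h] = (-(Dv(x) h)² + i D²v(x)[h, h]) u(x)`, and since `|u(x)| = 1` its modulus is at least
the absolute value of its real part, `(Dv(x) h)²`. Hence `(Dv(x) h)² ≤ ‖D²u(x)‖ ‖h‖²` for every `h`.
-/

/-- The circle-valued lift `u(x) = (cos (v x), sin (v x)) ∈ ℝ²` of `v : E → ℝ`,
where `ℝ² = EuclideanSpace ℝ (Fin 2)`. -/
noncomputable def circleLift {E : Type*} (v : E → ℝ) (x : E) : EuclideanSpace ℝ (Fin 2) :=
  (WithLp.equiv 2 (Fin 2 → ℝ)).symm ![Real.cos (v x), Real.sin (v x)]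

open Complex

section

variable {𝕜 E F : Type*} [NontriviallyNormedField 𝕜] [NormedAddCommGroup E] [NormedSpace 𝕜 E]
  [NormedAddCommGroup F] [NormedSpace 𝕜 F]

theorem fderiv_fderiv_comp_apply {γ γ' γ'' : 𝕜 → F} (hγ : ∀ t, HasDerivAt γ (γ' t) t)
    (hγ' : ∀ t, HasDerivAt γ' (γ'' t) t) {v : E → 𝕜} (hv : ContDiff 𝕜 2 v) (x h k : E) :
    fderiv 𝕜 (fderiv 𝕜 (γ ∘ v)) x h k =
      (fderiv 𝕜 v x h * fderiv 𝕜 v x k) • γ'' (v x) + fderiv 𝕜 (fderiv 𝕜 v) x h k • γ' (v x) := by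
  have hv₁ : Differentiable 𝕜 v := hv.differentiable (by norm_num)
  have hv₂ : Differentiable 𝕜 (fderiv 𝕜 v) :=
    (hv.fderiv_right (m := 1) (by norm_num)).differentiable (by norm_num)
  have hγ'v : HasFDerivAt (γ' ∘ v) ((fderiv 𝕜 v x).smulRight (γ'' (v x))) x :=
    (hγ' (v x)).hasFDerivAt.comp x (hv₁ x).hasFDerivAt
  have hDu : fderiv 𝕜 (γ ∘ v) =
      fun y => ContinuousLinearMap.smulRightL 𝕜 E F (fderiv 𝕜 v y) (γ' (v y)) := by
    funext y
    exact ((hγ (v y)).hasFDerivAt.comp y (hv₁ y).hasFDerivAt).fderiv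
  have hDu_diff : DifferentiableAt 𝕜 (fderiv 𝕜 (γ ∘ v)) x := by
    rw [hDu]
    exact ((ContinuousLinearMap.smulRightL 𝕜 E F).differentiableAt.comp x (hv₂ x)).clm_apply
      hγ'v.differentiableAt
  have hdir : HasFDerivAt (fun y => fderiv 𝕜 v y k • γ' (v y))
      (fderiv 𝕜 v x k • (fderiv 𝕜 v x).smulRight (γ'' (v x)) +
        ((fderiv 𝕜 (fderiv 𝕜 v) x).flip k).smulRight (γ' (v x))) x := by
    have := ((hv₂ x).hasFDerivAt.clm_apply (hasFDerivAt_const k x)).smul hγ'v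
    simp only [ContinuousLinearMap.comp_zero, zero_add] at this
    exact this
  have hcurry : fderiv 𝕜 (fderiv 𝕜 (γ ∘ v)) x h k =
      fderiv 𝕜 (fun y => fderiv 𝕜 (γ ∘ v) y k) x h := by
    simp [fderiv_clm_apply hDu_diff (differentiableAt_const k)]
  rw [hcurry, hDu]
  simp [hdir.fderiv, smul_smul, mul_comm]

theorem ContinuousLinearMap.sq_opNorm_le_of_forall_sq_norm_apply_le (f : E →L[𝕜] F) {C : ℝ}
    (hC : 0 ≤ C) (h : ∀ x, ‖f x‖ ^ 2 ≤ C * ‖x‖ ^ 2) : ‖f‖ ^ 2 ≤ C := by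
  have : ‖f‖ ≤ √C := f.opNorm_le_bound (Real.sqrt_nonneg C) fun x => by
    rw [← Real.sqrt_sq (norm_nonneg (f x)), ← Real.sqrt_sq (norm_nonneg x), ← Real.sqrt_mul hC]
    exact Real.sqrt_le_sqrt (h x)
  calc ‖f‖ ^ 2 ≤ √C ^ 2 := pow_le_pow_left₀ (norm_nonneg f) this 2
    _ = C := Real.sq_sqrt hC

theorem ContinuousMultilinearMap.norm_apply_self_self_le
    (T : ContinuousMultilinearMap 𝕜 (fun _ : Fin 2 => E) F) (h : E) :
    ‖T ![h, h]‖ ≤ ‖T‖ * ‖h‖ ^ 2 := by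
  simpa [Fin.prod_univ_two, sq] using T.le_opNorm ![h, h]

end

theorem circleLift_eq_comp {E : Type*} (v : E → ℝ) :
    circleLift v = Complex.orthonormalBasisOneI.repr ∘ circleMap 0 1 ∘ v := by
  funext y
  ext i
  fin_cases i <;> simp [circleLift, circleMap_zero]

theorem sq_fderiv_apply_le_norm_iteratedFDeriv_circleMap_comp {E : Type*} [NormedAddCommGroup E]
    [NormedSpace ℝ E] {v : E → ℝ} (hv : ContDiff ℝ 2 v) (x h : E) :
    fderiv ℝ v x h ^ 2 ≤ ‖iteratedFDeriv ℝ 2 (circleMap 0 1 ∘ v) x ![h, h]‖ := by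
  have hγ : ∀ t, HasDerivAt (circleMap 0 1) (circleMap 0 1 t * I) t := hasDerivAt_circleMap 0 1
  have hγ' : ∀ t, HasDerivAt (fun t => circleMap 0 1 t * I) (circleMap 0 1 t * I * I) t :=
    fun t => (hγ t).mul_const I
  rw [iteratedFDeriv_two_apply]
  simp only [Matrix.cons_val_zero, Matrix.cons_val_one]
  rw [fderiv_fderiv_comp_apply hγ hγ' hv]
  set p := fderiv ℝ v x h
  set q := fderiv ℝ (fderiv ℝ v) x h h
  have hfactor : (p * p) • (circleMap 0 1 (v x) * I * I) + q • (circleMap 0 1 (v x) * I)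
      = (((-p ^ 2 : ℝ) : ℂ) + q * I) * circleMap 0 1 (v x) := by
    simp only [Complex.real_smul]
    push_cast
    linear_combination (↑p ^ 2 * circleMap 0 1 (v x)) * I_mul_I
  rw [hfactor, norm_mul, norm_circleMap_zero, abs_one, mul_one]
  calc p ^ 2 = |(((-p ^ 2 : ℝ) : ℂ) + q * I).re| := by
        simp only [add_re, ofReal_re, re_ofReal_mul, I_re, mul_zero, add_zero, abs_neg, abs_sq]
    _ ≤ _ := abs_re_le_norm _

/-- If `v : E → ℝ` is `C²` and `u = (cos ∘ v, sin ∘ v)` is its circle-valued lift,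
then the full second derivative of `u` controls the square of the first derivative
of `v`: `‖D²u(x)‖ ≥ ‖Dv(x)‖²`. -/
theorem circleLift_iteratedFDeriv_two_ge {E : Type*} [NormedAddCommGroup E] [NormedSpace ℝ E]
    (v : E → ℝ) (hv : ContDiff ℝ 2 v) (x : E) :
    ‖iteratedFDeriv ℝ 2 (circleLift v) x‖ ≥ ‖fderiv ℝ v x‖ ^ 2 := by
  rw [circleLift_eq_comp, ge_iff_le, LinearIsometryEquiv.norm_iteratedFDeriv_comp_left]
  refine (fderiv ℝ v x).sq_opNorm_le_of_forall_sq_norm_apply_le (norm_nonneg _) fun h => ?_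
  calc ‖fderiv ℝ v x h‖ ^ 2 = fderiv ℝ v x h ^ 2 := sq_abs _
    _ ≤ ‖iteratedFDeriv ℝ 2 (circleMap 0 1 ∘ v) x ![h, h]‖ :=
      sq_fderiv_apply_le_norm_iteratedFDeriv_circleMap_comp hv x h
    _ ≤ _ := ContinuousMultilinearMap.norm_apply_self_self_le _ h
end

section
/- Let m ≥ 1 be an integer and let β > α > 0 be real numbers with 3·(β − α − 1) ≤ −m. Define u : ℝ^m → ℝ by u(x) = ‖x‖^{−α}·sin(‖x‖^{β}). Then the function x ↦ ‖fderiv ℝ u x‖³ is not Lebesgue-integrable on the open unit ball B(0,1) ⊆ ℝ^m. -/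
/-!
Near the origin `u` is radial with profile `g t = t ^ (-α) * sin (t ^ β)`, and since
`sin s ≤ s` and `cos s → 1` as `s → 0`, `g' t ≥ (β - α) / 2 * t ^ (β - α - 1)` for small `t > 0`.
Differentiating `u` along the ray through `x` gives `|g' ‖x‖| ≤ ‖Du x‖`, so
`‖Du x‖ ^ 3 ≳ ‖x‖ ^ (3 * (β - α - 1))` with `3 * (β - α - 1) ≤ -m`; in polar coordinates
`‖x‖ ^ s` is integrable near `0 ∈ ℝᵐ` only for `s > -m`.
-/

open MeasureTheory Metric Set Filter Topology

section Integrability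

variable {E : Type*} [NormedAddCommGroup E] [NormedSpace ℝ E] [FiniteDimensional ℝ E]
  [MeasurableSpace E] [BorelSpace E] [Nontrivial E] (μ : Measure E) [μ.IsAddHaarMeasure]

theorem integrableOn_ball_norm_rpow_iff {r s : ℝ} (hr : 0 < r) :
    IntegrableOn (fun x : E => ‖x‖ ^ s) (ball 0 r) μ ↔ -(Module.finrank ℝ E : ℝ) < s := by
  rw [integrableOn_fun_norm_addHaar μ (f := fun y => y ^ s)]
  have hcongr : EqOn (fun y : ℝ => y ^ (Module.finrank ℝ E - 1) • y ^ s)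
      (fun y => y ^ ((Module.finrank ℝ E : ℝ) - 1 + s)) (Ioo 0 r) := by
    intro y hy
    have hd : 1 ≤ Module.finrank ℝ E := Module.finrank_pos
    simp only [smul_eq_mul]
    rw [Real.rpow_add hy.1, ← Real.rpow_natCast, Nat.cast_sub hd, Nat.cast_one]
  rw [integrableOn_congr_fun hcongr measurableSet_Ioo,
    intervalIntegral.integrableOn_Ioo_rpow_iff hr]
  constructor <;> intro h <;> linarith

theorem not_integrableOn_of_mul_norm_rpow_le {f : E → ℝ} {c s : ℝ} (hc : 0 < c)
    (hs : s ≤ -(Module.finrank ℝ E : ℝ)) (hf : ∀ᶠ x in 𝓝[≠] 0, c * ‖x‖ ^ s ≤ f x)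
    {t : Set E} (ht : t ∈ 𝓝 0) : ¬ IntegrableOn f t μ := by
  intro hint
  obtain ⟨ε, hε, hεt, hεf⟩ :
      ∃ ε > 0, ball 0 ε ⊆ t ∧ ball 0 ε ∩ {0}ᶜ ⊆ {x | c * ‖x‖ ^ s ≤ f x} := by
    obtain ⟨ε₁, hε₁, h₁⟩ := Metric.mem_nhds_iff.mp ht
    obtain ⟨ε₂, hε₂, h₂⟩ := Metric.mem_nhdsWithin_iff.mp hf
    exact ⟨min ε₁ ε₂, lt_min hε₁ hε₂, (ball_subset_ball (min_le_left _ _)).trans h₁,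
      (inter_subset_inter_left _ (ball_subset_ball (min_le_right _ _))).trans h₂⟩
  have hpow : IntegrableOn (fun x : E => ‖x‖ ^ s) (ball 0 ε) μ := by
    refine Integrable.mono' ((hint.mono_set hεt).const_mul c⁻¹)
      (measurable_norm.pow_const s).aestronglyMeasurable ?_
    have hne : ∀ᵐ x ∂μ.restrict (ball 0 ε), x ≠ (0 : E) :=
      ae_restrict_of_ae (compl_mem_ae_iff.mpr (measure_singleton 0))
    filter_upwards [hne, ae_restrict_mem measurableSet_ball] with x hx0 hxε
    rw [Real.norm_of_nonneg (by positivity), le_inv_mul_iff₀ hc]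
    exact hεf ⟨hxε, hx0⟩
  exact absurd ((integrableOn_ball_norm_rpow_iff μ hε).mp hpow) hs.not_gt

end Integrability

theorem abs_deriv_le_norm_fderiv_comp_norm {E : Type*} [NormedAddCommGroup E] [NormedSpace ℝ E]
    {g : ℝ → ℝ} {x : E} (hx : x ≠ 0) (hg : DifferentiableAt ℝ (fun y : E => g ‖y‖) x) :
    |deriv g ‖x‖| ≤ ‖fderiv ℝ (fun y : E => g ‖y‖) x‖ := by
  set e : E := ‖x‖⁻¹ • x
  have hx₀ : 0 < ‖x‖ := norm_pos_iff.mpr hx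
  have he : ‖e‖ = 1 := norm_smul_inv_norm hx
  have hxe : ‖x‖ • e = x := by simp [e, smul_smul, hx₀.ne']
  have hline : HasDerivAt (fun t : ℝ => g ‖t • e‖) (fderiv ℝ (fun y : E => g ‖y‖) x e) ‖x‖ := by
    have hu : HasFDerivAt (fun y : E => g ‖y‖) (fderiv ℝ (fun y : E => g ‖y‖) x) (‖x‖ • e) := by
      rw [hxe]; exact hg.hasFDerivAt
    have hcomp := hu.comp_hasDerivAt ‖x‖ ((hasDerivAt_id ‖x‖).smul_const e)
    rw [one_smul] at hcomp
    exact hcomp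
  have hradial : (fun t : ℝ => g ‖t • e‖) =ᶠ[𝓝 ‖x‖] g := by
    filter_upwards [Ioi_mem_nhds hx₀] with t ht
    rw [norm_smul, he, mul_one, Real.norm_of_nonneg (le_of_lt ht)]
  calc |deriv g ‖x‖| = ‖fderiv ℝ (fun y : E => g ‖y‖) x e‖ := by
        rw [(hline.congr_of_eventuallyEq hradial.symm).deriv, Real.norm_eq_abs]
    _ ≤ ‖fderiv ℝ (fun y : E => g ‖y‖) x‖ := by
        simpa [he] using (fderiv ℝ (fun y : E => g ‖y‖) x).le_opNorm e

theorem eventually_mul_rpow_le_deriv_rpow_mul_sin_rpow {α β : ℝ} (hα : 0 < α) (hβ : α < β) :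
    ∀ᶠ r in 𝓝[>] 0, (β - α) / 2 * r ^ (β - α - 1) ≤
      deriv (fun t : ℝ => t ^ (-α) * Real.sin (t ^ β)) r := by
  have hβ₀ : 0 < β := hα.trans hβ
  have hcos : Tendsto (fun r : ℝ => Real.cos (r ^ β)) (𝓝[>] 0) (𝓝 1) := by
    have : ContinuousAt (fun r : ℝ => Real.cos (r ^ β)) 0 :=
      Real.continuous_cos.continuousAt.comp (Real.continuousAt_rpow_const 0 β (Or.inr hβ₀.le))
    simpa [Real.zero_rpow hβ₀.ne'] using this.tendsto.mono_left nhdsWithin_le_nhds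
  have hcos_gt : (β + α) / (2 * β) < 1 := by rw [div_lt_one (by positivity)]; linarith
  filter_upwards [self_mem_nhdsWithin, hcos.eventually (lt_mem_nhds hcos_gt)] with r hr hcos_r
  have hr : 0 < r := hr
  have hderiv : HasDerivAt (fun t : ℝ => t ^ (-α) * Real.sin (t ^ β))
      (-α * r ^ (-α - 1) * Real.sin (r ^ β) +
        r ^ (-α) * (Real.cos (r ^ β) * (β * r ^ (β - 1)))) r :=
    (Real.hasDerivAt_rpow_const (Or.inl hr.ne')).mul
      (Real.hasDerivAt_rpow_const (Or.inl hr.ne')).sin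
  have h₁ : r ^ (-α - 1) * r ^ β = r ^ (β - α - 1) := by rw [← Real.rpow_add hr]; ring_nf
  have h₂ : r ^ (-α) * r ^ (β - 1) = r ^ (β - α - 1) := by rw [← Real.rpow_add hr]; ring_nf
  have hsin : r ^ (-α - 1) * Real.sin (r ^ β) ≤ r ^ (β - α - 1) :=
    h₁ ▸ mul_le_mul_of_nonneg_left (Real.sin_le (by positivity)) (by positivity)
  rw [div_lt_iff₀ (by positivity)] at hcos_r
  have hpos : 0 < r ^ (β - α - 1) := by positivity
  rw [hderiv.deriv]
  nlinarith

theorem eventually_mul_norm_rpow_le_norm_fderiv {E : Type*} [NormedAddCommGroup E]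
    [InnerProductSpace ℝ E] {α β : ℝ} (hα : 0 < α) (hβ : α < β) :
    ∀ᶠ x in 𝓝[≠] (0 : E), (β - α) / 2 * ‖x‖ ^ (β - α - 1) ≤
      ‖fderiv ℝ (fun y : E => ‖y‖ ^ (-α) * Real.sin (‖y‖ ^ β)) x‖ := by
  filter_upwards [self_mem_nhdsWithin,
    tendsto_norm_nhdsNE_zero.eventually (eventually_mul_rpow_le_deriv_rpow_mul_sin_rpow hα hβ)]
    with x (hx : x ≠ 0) hbound
  have hnorm : DifferentiableAt ℝ (fun y : E => ‖y‖) x :=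
    (contDiffAt_norm ℝ hx).differentiableAt one_ne_zero
  have hx₀ : ‖x‖ ≠ 0 := norm_ne_zero_iff.mpr hx
  have hu : DifferentiableAt ℝ (fun y : E => ‖y‖ ^ (-α) * Real.sin (‖y‖ ^ β)) x :=
    (hnorm.rpow_const (Or.inl hx₀)).mul (hnorm.rpow_const (Or.inl hx₀)).sin
  exact hbound.trans ((le_abs_self _).trans
    (abs_deriv_le_norm_fderiv_comp_norm (g := fun t => t ^ (-α) * Real.sin (t ^ β)) hx hu))

/-- For the oscillating function `u(x) = ‖x‖^{-α} sin(‖x‖^β)` on `ℝᵐ` with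
`β > α > 0` and `3(β - α - 1) ≤ -m`, the cube of the operator norm of the Fréchet
derivative of `u` is not Lebesgue-integrable on the unit ball. -/
theorem oscillating_fderiv_cube_not_integrable (m : ℕ) (hm : 1 ≤ m) (α β : ℝ)
    (hα : 0 < α) (hβ : α < β) (h : 3 * (β - α - 1) ≤ -(m : ℝ)) :
    ¬ IntegrableOn
        (fun x : EuclideanSpace ℝ (Fin m) =>
          ‖fderiv ℝ
              (fun y : EuclideanSpace ℝ (Fin m) => ‖y‖ ^ (-α) * Real.sin (‖y‖ ^ β)) x‖ ^ 3)
        (Metric.ball 0 1) volume := by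
  have hδ : 0 < (β - α) / 2 := by linarith
  have hdim : Module.finrank ℝ (EuclideanSpace ℝ (Fin m)) = m := finrank_euclideanSpace_fin
  have : Nontrivial (EuclideanSpace ℝ (Fin m)) :=
    Module.nontrivial_of_finrank_pos (R := ℝ) (by rw [hdim]; exact hm)
  refine not_integrableOn_of_mul_norm_rpow_le volume (c := ((β - α) / 2) ^ 3)
    (s := 3 * (β - α - 1)) (by positivity) (by rwa [hdim]) ?_ (ball_mem_nhds 0 one_pos)
  filter_upwards [eventually_mul_norm_rpow_le_norm_fderiv hα hβ] with x hx
  calc ((β - α) / 2) ^ 3 * ‖x‖ ^ (3 * (β - α - 1)) = ((β - α) / 2 * ‖x‖ ^ (β - α - 1)) ^ 3 := by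
        rw [mul_pow, mul_comm 3, ← Real.rpow_mul_natCast (norm_nonneg x), Nat.cast_ofNat]
    _ ≤ _ := pow_le_pow_left₀ (by positivity) hx 3
end
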